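/- arXiv:1803.09194 — 4 statements merged into one kernel-verified Lean document; each statement's English description precedes it below -/
import Mathlib

section
/- Let H be a Hopf algebra with invertible antipode S, and M an anti-Yetter-Drinfeld contramodule, i.e., a left H-module with contraaction μ satisfying h·μ(f) = μ(h⁽²⁾ f(S(h⁽³⁾) − h⁽¹⁾)). Define τ : Hom^l(V,M) → Hom^r(V,M) by τ(φ)(v) = μ(h ↦ φ(hv)) and θ : Hom^r(V,M) → Hom^l(V,M) by θ(φ)(v) = μ(h ↦ φ(S⁻¹(h)v)). Then θ ∘ τ = id and τ ∘ θ = id. -/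
/-!
STATEMENT 6: Let `H` be a Hopf algebra with invertible antipode `S` and `M` an
anti-Yetter-Drinfeld contramodule (a left `H`-module with an `H`-contraaction `μ`
satisfying the aYD condition `h • μ(f) = μ(h⁽²⁾ • f(S(h⁽³⁾) − h⁽¹⁾))`).
Define `τ(φ)(v) = μ(h ↦ φ(h • v))` and `θ(φ)(v) = μ(h ↦ φ(S⁻¹(h) • v))`.
Then `θ ∘ τ = id` and `τ ∘ θ = id`.
-/

open TensorProduct

section

variable {k H V M : Type*} [Field k] [Ring H] [HopfAlgebra k H]
  [AddCommGroup M] [Module k M] [Module H M] [IsScalarTower k H M] [SMulCommClass k H M]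
  [AddCommGroup V] [Module k V] [Module H V] [IsScalarTower k H V] [SMulCommClass k H V]

/-- The `k`-linear map `h ↦ h • v`. -/
def smulPoint (v : V) : H →ₗ[k] V where
  toFun h := h • v
  map_add' a b := add_smul a b v
  map_smul' c a := smul_assoc c a v

@[simp] lemma smulPoint_apply (v : V) (h : H) : (smulPoint (k := k) v) h = h • v := rfl

lemma smulPoint_add (v v' : V) :
    (smulPoint (v + v') : H →ₗ[k] V) = smulPoint v + smulPoint v' := by
  ext h; simp [smul_add]

lemma smulPoint_smul (c : k) (v : V) :
    (smulPoint (c • v) : H →ₗ[k] V) = c • smulPoint v := by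
  ext h
  simp only [smulPoint_apply, LinearMap.smul_apply]
  exact smul_comm h c v

/-- `τ(φ)(v) = μ(h ↦ φ(h • v))`. -/
def tauMap (μ : (H →ₗ[k] M) →ₗ[k] M) (φ : V →ₗ[k] M) : V →ₗ[k] M where
  toFun v := μ (φ ∘ₗ smulPoint v)
  map_add' v v' := by rw [smulPoint_add, LinearMap.comp_add, map_add]
  map_smul' c v := by rw [smulPoint_smul, LinearMap.comp_smul, map_smul]; rfl

/-- `θ(φ)(v) = μ(h ↦ φ(S⁻¹(h) • v))`. -/
def thetaMap (Sinv : H →ₗ[k] H) (μ : (H →ₗ[k] M) →ₗ[k] M) (φ : V →ₗ[k] M) : V →ₗ[k] M where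
  toFun v := μ (φ ∘ₗ smulPoint v ∘ₗ Sinv)
  map_add' v v' := by
    rw [smulPoint_add, LinearMap.add_comp, LinearMap.comp_add, map_add]
  map_smul' c v := by
    rw [smulPoint_smul, LinearMap.smul_comp, LinearMap.comp_smul, map_smul]; rfl

/-!
Contra-associativity turns `θ (τ φ) v` into `μ (h ↦ φ (h⁽²⁾ S⁻¹(h⁽¹⁾) • v))` and `τ (θ φ) v` into
`μ (h ↦ φ (S⁻¹(h⁽²⁾) h⁽¹⁾ • v))`. The antihomomorphism `S` sends these two sums to
`h⁽¹⁾ S(h⁽²⁾) = ε(h) 1` and `S(h⁽¹⁾) h⁽²⁾ = ε(h) 1`; since `S` is injective, both sums are `ε(h) 1`,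
and the counit law of `μ` returns `φ v`.
-/

open Coalgebra

namespace HopfAlgebra

variable {R A : Type*} [CommSemiring R] [Semiring A] [HopfAlgebra R A]
  {Sinv : A → A} (hleft : ∀ x, Sinv (antipode R x) = x) (hright : ∀ x, antipode R (Sinv x) = x)

include hleft hright

lemma sum_right_mul_inv_left_eq_smul {a : A} {ι : Type*} (r : Repr R a ι) :
    ∑ i ∈ r.index, r.right i * Sinv (r.left i) = counit (R := R) a • 1 := by
  apply Function.LeftInverse.injective hleft
  simp only [map_sum, map_smul, antipode_one, antipode_mul_antidistrib, hright]
  exact sum_mul_antipode_eq_smul r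

lemma sum_inv_right_mul_left_eq_smul {a : A} {ι : Type*} (r : Repr R a ι) :
    ∑ i ∈ r.index, Sinv (r.right i) * r.left i = counit (R := R) a • 1 := by
  apply Function.LeftInverse.injective hleft
  simp only [map_sum, map_smul, antipode_one, antipode_mul_antidistrib, hright]
  exact sum_antipode_mul_eq_smul r

end HopfAlgebra

section

omit [Module H M] [IsScalarTower k H M] [SMulCommClass k H M]

lemma thetaMap_tauMap_apply (Sinv : H →ₗ[k] H) (μ : (H →ₗ[k] M) →ₗ[k] M) (φ : V →ₗ[k] M)
    (v : V) :
    thetaMap Sinv μ (tauMap μ φ) v = μ (μ ∘ₗ curry (φ ∘ₗ smulPoint v ∘ₗ LinearMap.mul' k H ∘ₗ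
      map LinearMap.id Sinv ∘ₗ (TensorProduct.comm k H H).toLinearMap)) :=
  congrArg μ <| LinearMap.ext fun _ => congrArg μ <| LinearMap.ext fun _ => by simp [mul_smul]

lemma tauMap_thetaMap_apply (Sinv : H →ₗ[k] H) (μ : (H →ₗ[k] M) →ₗ[k] M) (φ : V →ₗ[k] M)
    (v : V) :
    tauMap μ (thetaMap Sinv μ φ) v = μ (μ ∘ₗ curry (φ ∘ₗ smulPoint v ∘ₗ LinearMap.mul' k H ∘ₗ
      map Sinv LinearMap.id ∘ₗ (TensorProduct.comm k H H).toLinearMap)) :=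
  congrArg μ <| LinearMap.ext fun _ => congrArg μ <| LinearMap.ext fun _ => by simp [mul_smul]

lemma contraaction_curry_comp_eq {μ : (H →ₗ[k] M) →ₗ[k] M}
    (hassoc : ∀ f : H ⊗[k] H →ₗ[k] M, μ (μ ∘ₗ curry f) = μ (f ∘ₗ comul))
    (hcounit : ∀ m : M, μ ((counit : H →ₗ[k] k).smulRight m) = m)
    (g : H →ₗ[k] M) {P : H ⊗[k] H →ₗ[k] H} (hP : ∀ h, P (comul h) = counit (R := k) h • 1) :
    μ (μ ∘ₗ curry (g ∘ₗ P)) = g 1 := by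
  rw [hassoc]
  conv_rhs => rw [← hcounit (g 1)]
  congr 1
  ext h
  simp [hP]

end

theorem theta_tau_inverse_general
    (Sinv : H →ₗ[k] H)
    (hSinv : ∀ x : H, Sinv (HopfAlgebra.antipode (R := k) x) = x ∧
      HopfAlgebra.antipode (R := k) (Sinv x) = x)
    (μ : (H →ₗ[k] M) →ₗ[k] M)
    -- `M` is an `H`-contramodule: contra-associativity ...
    (hassoc : ∀ f : H ⊗[k] H →ₗ[k] M,
      μ (μ ∘ₗ TensorProduct.curry f) = μ (f ∘ₗ (Coalgebra.comul : H →ₗ[k] H ⊗[k] H)))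
    -- ... and counitality
    (hcounit : ∀ m : M, μ ((Coalgebra.counit : H →ₗ[k] k).smulRight m) = m) :
    ∀ φ : V →ₗ[k] M,
      thetaMap Sinv μ (tauMap μ φ) = φ ∧ tauMap μ (thetaMap Sinv μ φ) = φ := by
  have hleft x := (hSinv x).1
  have hright x := (hSinv x).2
  refine fun φ => ⟨LinearMap.ext fun v => ?_, LinearMap.ext fun v => ?_⟩
  · rw [thetaMap_tauMap_apply]
    refine (contraaction_curry_comp_eq hassoc hcounit (φ ∘ₗ smulPoint v) fun h => ?_).trans
      (by simp)
    rw [← (ℛ k h).eq]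
    simpa [map_sum] using HopfAlgebra.sum_right_mul_inv_left_eq_smul hleft hright (ℛ k h)
  · rw [tauMap_thetaMap_apply]
    refine (contraaction_curry_comp_eq hassoc hcounit (φ ∘ₗ smulPoint v) fun h => ?_).trans
      (by simp)
    rw [← (ℛ k h).eq]
    simpa [map_sum] using HopfAlgebra.sum_inv_right_mul_left_eq_smul hleft hright (ℛ k h)

theorem theta_tau_inverse
    (Sinv : H →ₗ[k] H)
    (hSinv : ∀ x : H, Sinv (HopfAlgebra.antipode (R := k) x) = x ∧
      HopfAlgebra.antipode (R := k) (Sinv x) = x)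
    (μ : (H →ₗ[k] M) →ₗ[k] M)
    -- `M` is an `H`-contramodule: contra-associativity ...
    (hassoc : ∀ f : H ⊗[k] H →ₗ[k] M,
      μ (μ ∘ₗ TensorProduct.curry f) = μ (f ∘ₗ (Coalgebra.comul : H →ₗ[k] H ⊗[k] H)))
    -- ... and counitality
    (hcounit : ∀ m : M, μ ((Coalgebra.counit : H →ₗ[k] k).smulRight m) = m)
    -- the aYD condition  h • μ(f) = μ(x ↦ h⁽²⁾ • f (S(h⁽³⁾) * x * h⁽¹⁾))
    (hayd : ∀ (h : H) (f : H →ₗ[k] M) {ι : Type*} (r : Coalgebra.Repr k h ι)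
        {κ : ι → Type*} (r2 : ∀ i : ι, Coalgebra.Repr k (r.right i) (κ i)),
      h • μ f = μ (∑ i ∈ r.index, ∑ j ∈ (r2 i).index,
        ((r2 i).left j) • (f ∘ₗ LinearMap.mulRight k (r.left i) ∘ₗ
          LinearMap.mulLeft k (HopfAlgebra.antipode (R := k) ((r2 i).right j))))) :
    ∀ φ : V →ₗ[k] M,
      thetaMap Sinv μ (tauMap μ φ) = φ ∧ tauMap μ (thetaMap Sinv μ φ) = φ :=
  theta_tau_inverse_general Sinv hSinv μ hassoc hcounit

end
end

section
/- For a quasi-Hopf algebra H with associator Φ = X⊗Y⊗Z, the identity X β S(Y) α Z = 1 together with the antipode axioms implies that the evaluation map ev^l : Hom^l(M,N) ⊗ M → N, φ ⊗ m ↦ X φ(S(Y) α Z m), is a morphism of left H-modules. -/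
/-!
STATEMENT 8: For a quasi-Hopf algebra `H` with associator `Φ = X ⊗ Y ⊗ Z`, the identity
`X β S(Y) α Z = 1` together with the antipode axioms implies that the evaluation map
`ev^l : Hom^l(M,N) ⊗ M → N`, `φ ⊗ m ↦ X • φ(S(Y) α Z • m)`, is a morphism of left
`H`-modules (the `H`-action on the tensor product being diagonal via `Δ`, and the action
on `Hom^l(M,N) = Hom_k(M,N)` being `(h·φ) = h⁽¹⁾ φ(S(h⁽²⁾) −)`).

Sweedler sums are expressed via arbitrary finite representations of the relevant tensors.
-/

open TensorProduct

/-- A quasi-Hopf algebra (Drinfeld): a quasi-bialgebra `(H, Δ, ε, Φ)` together with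
`α`, `β` and an invertible antipode `S`. -/
structure QuasiHopfAlgebra (k H : Type) [Field k] [Ring H] [Algebra k H] where
  /-- comultiplication, an algebra map `H → H ⊗ H` -/
  comul : H →ₐ[k] H ⊗[k] H
  /-- counit, an algebra map `H → k` -/
  counit : H →ₐ[k] k
  /-- the associator `Φ ∈ H ⊗ H ⊗ H` -/
  Phi : H ⊗[k] (H ⊗[k] H)
  /-- the inverse of the associator -/
  PhiInv : H ⊗[k] (H ⊗[k] H)
  Phi_inv_mul : Phi * PhiInv = 1
  Phi_mul_inv : PhiInv * Phi = 1
  /-- quasi-coassociativity: `(id ⊗ Δ)(Δ a) = Φ ((Δ ⊗ id)(Δ a)) Φ⁻¹` -/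
  quasi_coassoc : ∀ a : H,
    (Algebra.TensorProduct.map (AlgHom.id k H) comul) (comul a) =
      Phi * ((Algebra.TensorProduct.assoc k k k H H H)
        ((Algebra.TensorProduct.map comul (AlgHom.id k H)) (comul a))) * PhiInv
  /-- the pentagon axiom for `Φ` -/
  pentagon :
    (Algebra.TensorProduct.map (AlgHom.id k H)
        (Algebra.TensorProduct.map (AlgHom.id k H) comul)) Phi *
      (Algebra.TensorProduct.assoc k k k H H (H ⊗[k] H))
        ((Algebra.TensorProduct.map comul (AlgHom.id k (H ⊗[k] H))) Phi) =
    (1 : H) ⊗ₜ[k] Phi *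
      (Algebra.TensorProduct.map (AlgHom.id k H)
          (Algebra.TensorProduct.assoc k k k H H H).toAlgHom)
        ((Algebra.TensorProduct.map (AlgHom.id k H)
          (Algebra.TensorProduct.map comul (AlgHom.id k H))) Phi) *
      (Algebra.TensorProduct.map (AlgHom.id k H)
        (Algebra.TensorProduct.map (AlgHom.id k H)
          (Algebra.TensorProduct.includeLeft : H →ₐ[k] H ⊗[k] H))) Phi
  /-- counit axiom `(ε ⊗ id)(Δ a) = a` -/
  counit_comul : ∀ a : H,
    (Algebra.TensorProduct.lid k H) ((Algebra.TensorProduct.map counit (AlgHom.id k H)) (comul a)) = a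
  /-- counit axiom `(id ⊗ ε)(Δ a) = a` -/
  comul_counit : ∀ a : H,
    (Algebra.TensorProduct.rid k k H) ((Algebra.TensorProduct.map (AlgHom.id k H) counit) (comul a)) = a
  /-- `(id ⊗ ε ⊗ id)(Φ) = 1 ⊗ 1` -/
  counit_Phi :
    (Algebra.TensorProduct.map (AlgHom.id k H) (Algebra.TensorProduct.lid k H).toAlgHom)
      ((Algebra.TensorProduct.map (AlgHom.id k H)
        (Algebra.TensorProduct.map counit (AlgHom.id k H))) Phi) = (1 : H ⊗[k] H)
  /-- the antipode -/
  S : H →ₗ[k] H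
  /-- the inverse of the antipode -/
  Sinv : H →ₗ[k] H
  S_antihom : ∀ a b : H, S (a * b) = S b * S a
  S_one : S 1 = 1
  Sinv_S : ∀ a : H, Sinv (S a) = a
  S_Sinv : ∀ a : H, S (Sinv a) = a
  /-- the distinguished element `α` -/
  alpha : H
  /-- the distinguished element `β` -/
  beta : H
  /-- `S(h⁽¹⁾) α h⁽²⁾ = ε(h) α` -/
  S_alpha : ∀ (a : H) {ι : Type} (s : Finset ι) (x y : ι → H),
    (∑ i ∈ s, x i ⊗ₜ[k] y i) = comul a → ∑ i ∈ s, S (x i) * alpha * y i = counit a • alpha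
  /-- `h⁽¹⁾ β S(h⁽²⁾) = ε(h) β` -/
  beta_S : ∀ (a : H) {ι : Type} (s : Finset ι) (x y : ι → H),
    (∑ i ∈ s, x i ⊗ₜ[k] y i) = comul a → ∑ i ∈ s, x i * beta * S (y i) = counit a • beta
  /-- `X β S(Y) α Z = 1` where `Φ = X ⊗ Y ⊗ Z` -/
  ev_coev : ∀ {ι : Type} (s : Finset ι) (X Y Z : ι → H),
    (∑ i ∈ s, X i ⊗ₜ[k] (Y i ⊗ₜ[k] Z i)) = Phi →
      ∑ i ∈ s, X i * beta * S (Y i) * alpha * Z i = 1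
  /-- `S(P) α Q β R = 1` where `Φ⁻¹ = P ⊗ Q ⊗ R` -/
  coev_ev : ∀ {ι : Type} (s : Finset ι) (P Q R : ι → H),
    (∑ i ∈ s, P i ⊗ₜ[k] (Q i ⊗ₜ[k] R i)) = PhiInv →
      ∑ i ∈ s, S (P i) * alpha * Q i * beta * R i = 1

/-!
`ev^l (φ ⊗ m)` is the value at `Φ` of the linear map `u ⊗ v ⊗ w ↦ u • φ ((S v * α * w) • m)`,
and the left-hand side of the claim is its value at `Φ · (Δ ⊗ id) Δ h`. Quasi-coassociativity
rewrites this as `(id ⊗ Δ) Δ h · Φ`; there the axiom `S (h₍₁₎) α h₍₂₎ = ε h α` collapses the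
last two legs of `(id ⊗ Δ) Δ h`, and the counit axiom leaves `h • ev^l (φ ⊗ m)`.
-/

section Evaluation

variable {k H M N : Type} [Field k] [Ring H] [Algebra k H]
  [AddCommGroup M] [Module k M] [Module H M] [IsScalarTower k H M] [AddCommGroup N] [Module k N]
  (S : H →ₗ[k] H) (α : H) (φ : M →ₗ[k] N) (m : M)

noncomputable def evlInner : H ⊗[k] H →ₗ[k] N :=
  φ ∘ₗ (LinearMap.toSpanSingleton H M m).restrictScalars k ∘ₗ LinearMap.mul' k H ∘ₗ
    TensorProduct.map (LinearMap.mulRight k α ∘ₗ S) LinearMap.id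

@[simp]
theorem evlInner_tmul (v w : H) : evlInner S α φ m (v ⊗ₜ w) = φ ((S v * α * w) • m) := by
  simp [evlInner]

variable [Module H N] [IsScalarTower k H N]

noncomputable def evlAt : H ⊗[k] (H ⊗[k] H) →ₗ[k] N :=
  TensorProduct.lift (Algebra.lsmul k k N).toLinearMap ∘ₗ
    TensorProduct.map LinearMap.id (evlInner S α φ m)

@[simp]
theorem evlAt_tmul (u : H) (t : H ⊗[k] H) : evlAt S α φ m (u ⊗ₜ t) = u • evlInner S α φ m t := by
  simp [evlAt]

theorem evlAt_eq_sum {ι : Type} (s : Finset ι) (X Y Z : ι → H) {t : H ⊗[k] (H ⊗[k] H)}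
    (ht : ∑ i ∈ s, X i ⊗ₜ[k] (Y i ⊗ₜ[k] Z i) = t) :
    evlAt S α φ m t = ∑ i ∈ s, X i • φ ((S (Y i) * α * Z i) • m) := by
  simp [← ht]

end Evaluation

namespace QuasiHopfAlgebra

variable {k H : Type} [Field k] [Ring H] [Algebra k H] (Q : QuasiHopfAlgebra k H)

theorem quasi_coassoc_mul_Phi (a : H) :
    (Algebra.TensorProduct.map (AlgHom.id k H) Q.comul) (Q.comul a) * Q.Phi =
      Q.Phi * (Algebra.TensorProduct.assoc k k k H H H)
        ((Algebra.TensorProduct.map Q.comul (AlgHom.id k H)) (Q.comul a)) := by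
  rw [Q.quasi_coassoc a, mul_assoc _ Q.PhiInv, Q.Phi_mul_inv, mul_one]

variable {M N : Type} [AddCommGroup M] [Module k M] [Module H M] [IsScalarTower k H M]
  [AddCommGroup N] [Module k N] (φ : M →ₗ[k] N) (m : M)

theorem evlInner_comul_mul (b : H) (t : H ⊗[k] H) :
    evlInner Q.S Q.alpha φ m (Q.comul b * t) = Q.counit b • evlInner Q.S Q.alpha φ m t := by
  induction t using TensorProduct.induction_on with
  | zero => simp
  | add t₁ t₂ h₁ h₂ => simp [mul_add, h₁, h₂]
  | tmul v w =>
    obtain ⟨s, hs⟩ := TensorProduct.exists_finset (Q.comul b)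
    have hα : ∑ p ∈ s, Q.S p.1 * Q.alpha * p.2 = Q.counit b • Q.alpha :=
      Q.S_alpha b s Prod.fst Prod.snd hs.symm
    calc evlInner Q.S Q.alpha φ m (Q.comul b * v ⊗ₜ w)
        = φ ((Q.S v * (∑ p ∈ s, Q.S p.1 * Q.alpha * p.2) * w) • m) := by
          simp [hs, Finset.sum_mul, Finset.mul_sum, Finset.sum_smul, Q.S_antihom, mul_assoc]
      _ = Q.counit b • evlInner Q.S Q.alpha φ m (v ⊗ₜ w) := by
          simp [hα]

variable [Module H N] [IsScalarTower k H N]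

theorem evlAt_map_comul_mul (x : H ⊗[k] H) (t : H ⊗[k] (H ⊗[k] H)) :
    evlAt Q.S Q.alpha φ m ((Algebra.TensorProduct.map (AlgHom.id k H) Q.comul) x * t) =
      Algebra.TensorProduct.rid k k H (Algebra.TensorProduct.map (AlgHom.id k H) Q.counit x) •
        evlAt Q.S Q.alpha φ m t := by
  induction x using TensorProduct.induction_on with
  | zero => simp
  | add x₁ x₂ h₁ h₂ => simp [add_mul, h₁, h₂, add_smul]
  | tmul a b =>
    simp only [Algebra.TensorProduct.map_tmul, AlgHom.coe_id, id_eq,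
      Algebra.TensorProduct.rid_tmul]
    induction t using TensorProduct.induction_on with
    | zero => simp
    | add t₁ t₂ h₁ h₂ => rw [mul_add, map_add, map_add, h₁, h₂, smul_add]
    | tmul y t =>
      rw [Algebra.TensorProduct.tmul_mul_tmul, evlAt_tmul, evlAt_tmul, evlInner_comul_mul,
        smul_assoc, mul_smul, smul_comm y, smul_comm a]

theorem evlAt_mul_Phi_eq_sum (h : H) {ιΦ : Type} (sΦ : Finset ιΦ) (X Y Z : ιΦ → H)
    (hΦ : ∑ i ∈ sΦ, X i ⊗ₜ[k] (Y i ⊗ₜ[k] Z i) = Q.Phi)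
    {ιh : Type} (sh : Finset ιh) (a b : ιh → H) (hh : ∑ j ∈ sh, a j ⊗ₜ[k] b j = Q.comul h)
    {ιc : ιh → Type} (sc : ∀ j, Finset (ιc j)) (c d : ∀ j, ιc j → H)
    (hc : ∀ j, ∑ l ∈ sc j, c j l ⊗ₜ[k] d j l = Q.comul (a j)) :
    evlAt Q.S Q.alpha φ m (Q.Phi * (Algebra.TensorProduct.assoc k k k H H H)
        ((Algebra.TensorProduct.map Q.comul (AlgHom.id k H)) (Q.comul h))) =
      ∑ j ∈ sh, ∑ i ∈ sΦ, ∑ l ∈ sc j,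
        X i • (c j l • φ (Q.S (d j l) • ((Q.S (Y i) * Q.alpha * Z i) • (b j • m)))) := by
  simp only [← hh, ← hΦ, ← hc, map_sum, Algebra.TensorProduct.map_tmul, AlgHom.coe_id, id_eq,
    TensorProduct.sum_tmul, Algebra.TensorProduct.assoc_tmul, Finset.mul_sum, Finset.sum_mul,
    Algebra.TensorProduct.tmul_mul_tmul, evlAt_tmul, evlInner_tmul, Q.S_antihom]
  refine Finset.sum_congr rfl fun j _ => ?_
  rw [Finset.sum_comm]
  simp only [mul_smul, mul_assoc]

end QuasiHopfAlgebra

theorem evl_is_module_morphism_general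
    {k H : Type} [Field k] [Ring H] [Algebra k H] (Q : QuasiHopfAlgebra k H)
    {M N : Type} [AddCommGroup M] [Module k M] [Module H M] [IsScalarTower k H M]
    [AddCommGroup N] [Module k N] [Module H N] [IsScalarTower k H N] :
    ∀ (h : H) (φ : M →ₗ[k] N) (m : M)
      {ιΦ : Type} (sΦ : Finset ιΦ) (X Y Z : ιΦ → H)
      (_ : ∑ i ∈ sΦ, X i ⊗ₜ[k] (Y i ⊗ₜ[k] Z i) = Q.Phi)
      {ιh : Type} (sh : Finset ιh) (a b : ιh → H)
      (_ : ∑ j ∈ sh, a j ⊗ₜ[k] b j = Q.comul h)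
      {ιc : ιh → Type} (sc : ∀ j, Finset (ιc j)) (c d : ∀ j, ιc j → H)
      (_ : ∀ j, ∑ l ∈ sc j, c j l ⊗ₜ[k] d j l = Q.comul (a j)),
      -- `ev^l (h • (φ ⊗ m)) = ∑ⱼ ev^l ((a j · φ) ⊗ (b j • m))`
      ∑ j ∈ sh, ∑ i ∈ sΦ, ∑ l ∈ sc j,
          X i • (c j l • φ (Q.S (d j l) • ((Q.S (Y i) * Q.alpha * Z i) • (b j • m)))) =
        -- `h • ev^l (φ ⊗ m)`
        h • ∑ i ∈ sΦ, X i • φ ((Q.S (Y i) * Q.alpha * Z i) • m) := by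
  intro h φ m ιΦ sΦ X Y Z hΦ ιh sh a b hh ιc sc c d hc
  calc _ = evlAt Q.S Q.alpha φ m (Q.Phi * (Algebra.TensorProduct.assoc k k k H H H)
          ((Algebra.TensorProduct.map Q.comul (AlgHom.id k H)) (Q.comul h))) :=
        (Q.evlAt_mul_Phi_eq_sum φ m h sΦ X Y Z hΦ sh a b hh sc c d hc).symm
    _ = evlAt Q.S Q.alpha φ m
          ((Algebra.TensorProduct.map (AlgHom.id k H) Q.comul) (Q.comul h) * Q.Phi) := by
        rw [Q.quasi_coassoc_mul_Phi]
    _ = h • evlAt Q.S Q.alpha φ m Q.Phi := by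
        rw [Q.evlAt_map_comul_mul, Q.comul_counit]
    _ = _ := by rw [evlAt_eq_sum _ _ _ _ sΦ X Y Z hΦ]

/-- `ev^l` is a morphism of left `H`-modules: `ev^l (h • (φ ⊗ m)) = h • ev^l (φ ⊗ m)`,
written out on Sweedler representations. -/
theorem evl_is_module_morphism
    {k H : Type} [Field k] [Ring H] [Algebra k H] (Q : QuasiHopfAlgebra k H)
    {M N : Type} [AddCommGroup M] [Module k M] [Module H M] [IsScalarTower k H M]
    [SMulCommClass k H M]
    [AddCommGroup N] [Module k N] [Module H N] [IsScalarTower k H N] [SMulCommClass k H N] :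
    ∀ (h : H) (φ : M →ₗ[k] N) (m : M)
      {ιΦ : Type} (sΦ : Finset ιΦ) (X Y Z : ιΦ → H)
      (_ : ∑ i ∈ sΦ, X i ⊗ₜ[k] (Y i ⊗ₜ[k] Z i) = Q.Phi)
      {ιh : Type} (sh : Finset ιh) (a b : ιh → H)
      (_ : ∑ j ∈ sh, a j ⊗ₜ[k] b j = Q.comul h)
      {ιc : ιh → Type} (sc : ∀ j, Finset (ιc j)) (c d : ∀ j, ιc j → H)
      (_ : ∀ j, ∑ l ∈ sc j, c j l ⊗ₜ[k] d j l = Q.comul (a j)),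
      -- `ev^l (h • (φ ⊗ m)) = ∑ⱼ ev^l ((a j · φ) ⊗ (b j • m))`
      ∑ j ∈ sh, ∑ i ∈ sΦ, ∑ l ∈ sc j,
          X i • (c j l • φ (Q.S (d j l) • ((Q.S (Y i) * Q.alpha * Z i) • (b j • m)))) =
        -- `h • ev^l (φ ⊗ m)`
        h • ∑ i ∈ sΦ, X i • φ ((Q.S (Y i) * Q.alpha * Z i) • m) :=
  evl_is_module_morphism_general Q
end

section
/- For a quasi-Hopf algebra H, the evaluation ev^r : M ⊗ Hom^r(M,N) → N, m ⊗ φ ↦ R φ(S⁻¹(Q) S⁻¹(α) P m), is a morphism of left H-modules, where Hom^r(M,N) = Hom_k(M,N) with action (h·φ) = h⁽²⁾φ(S⁻¹(h⁽¹⁾)−). -/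
/-!
View `ev^r (m ⊗ φ)` as the value at `Φ⁻¹ = P ⊗ Q ⊗ R` of the linear map
`x ⊗ y ⊗ z ↦ z • φ (S⁻¹(y) S⁻¹(α) x • m)` on `H ⊗ H ⊗ H`. Then `ev^r (h • (m ⊗ φ))` is its value at
`Φ⁻¹ · (id ⊗ Δ)Δ(h)`, which quasi-coassociativity rewrites as `(Δ ⊗ id)Δ(h) · Φ⁻¹`. Applying `S⁻¹`
to the axiom `S(h₁) α h₂ = ε(h) α` gives `S⁻¹(h₂) S⁻¹(α) h₁ = ε(h) S⁻¹(α)`, which absorbs the first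
two legs of `(Δ ⊗ id)Δ(h)`; the counit axiom then leaves exactly the action of `h`.
-/

open TensorProduct


namespace QuasiHopfAlgebra

variable {k H : Type} [Field k] [Ring H] [Algebra k H] (Q : QuasiHopfAlgebra k H)

lemma Sinv_mul (x y : H) : Q.Sinv (x * y) = Q.Sinv y * Q.Sinv x := by
  rw [← Q.Sinv_S (Q.Sinv y * Q.Sinv x), Q.S_antihom, Q.S_Sinv, Q.S_Sinv]

lemma sum_Sinv_mul_Sinv_alpha_mul (a : H) {ι : Type} (s : Finset ι) (x y : ι → H)
    (hxy : ∑ i ∈ s, x i ⊗ₜ[k] y i = Q.comul a) :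
    ∑ i ∈ s, Q.Sinv (y i) * Q.Sinv Q.alpha * x i = Q.counit a • Q.Sinv Q.alpha := by
  simpa [Sinv_mul, Q.Sinv_S, mul_assoc] using congrArg Q.Sinv (Q.S_alpha a s x y hxy)

lemma sum_counit_smul (a : H) {ι : Type} (s : Finset ι) (x y : ι → H)
    (hxy : ∑ i ∈ s, x i ⊗ₜ[k] y i = Q.comul a) :
    ∑ i ∈ s, Q.counit (x i) • y i = a := by
  simpa [← hxy] using Q.counit_comul a

lemma PhiInv_mul_map_comul (a : H) :
    Q.PhiInv * Algebra.TensorProduct.map (AlgHom.id k H) Q.comul (Q.comul a) =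
      Algebra.TensorProduct.assoc k k k H H H
          (Algebra.TensorProduct.map Q.comul (AlgHom.id k H) (Q.comul a)) * Q.PhiInv := by
  rw [Q.quasi_coassoc a, ← mul_assoc, ← mul_assoc, Q.Phi_mul_inv, one_mul]

variable {M N : Type} [AddCommGroup M] [Module k M] [Module H M] [IsScalarTower k H M]
  [AddCommGroup N] [Module k N] [Module H N] [IsScalarTower k H N]

noncomputable def evrTensor (m : M) (φ : M →ₗ[k] N) : H ⊗[k] (H ⊗[k] H) →ₗ[k] N :=
  TensorProduct.lift ((Algebra.lsmul k k N).toLinearMap.flip ∘ₗ φ ∘ₗ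
      (Algebra.lsmul k k M).toLinearMap.flip m) ∘ₗ
    TensorProduct.map (TensorProduct.lift ((LinearMap.mul k H).flip.compl₂
      (LinearMap.mulRight k (Q.Sinv Q.alpha) ∘ₗ Q.Sinv))) LinearMap.id ∘ₗ
    (TensorProduct.assoc k H H H).symm.toLinearMap

variable (m : M) (φ : M →ₗ[k] N)

@[simp] lemma evrTensor_tmul (x y z : H) :
    Q.evrTensor m φ (x ⊗ₜ (y ⊗ₜ z)) = z • φ ((Q.Sinv y * Q.Sinv Q.alpha * x) • m) := rfl

lemma evrTensor_tmul_mul_tmul (x y z a c d : H) :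
    Q.evrTensor m φ ((x ⊗ₜ (y ⊗ₜ z)) * (a ⊗ₜ (c ⊗ₜ d))) =
      z • d • φ (Q.Sinv c • (Q.Sinv y * Q.Sinv Q.alpha * x) • a • m) := by
  simp only [Algebra.TensorProduct.tmul_mul_tmul, evrTensor_tmul, Sinv_mul, mul_smul, mul_assoc]

lemma evrTensor_assoc_comul_tmul_mul (a w x y z : H) :
    Q.evrTensor m φ (Algebra.TensorProduct.assoc k k k H H H
        (Algebra.TensorProduct.map Q.comul (AlgHom.id k H) (a ⊗ₜ w)) * (x ⊗ₜ (y ⊗ₜ z))) =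
      Q.counit a • Q.evrTensor m φ (x ⊗ₜ (y ⊗ₜ (w * z))) := by
  obtain ⟨s, hs⟩ := TensorProduct.exists_finset (Q.comul a)
  have hα : ∑ p ∈ s, Q.Sinv (p.2 * y) * Q.Sinv Q.alpha * (p.1 * x) =
      Q.counit a • (Q.Sinv y * Q.Sinv Q.alpha * x) := by
    calc _ = Q.Sinv y * (∑ p ∈ s, Q.Sinv p.2 * Q.Sinv Q.alpha * p.1) * x := by
          simp only [Sinv_mul, Finset.mul_sum, Finset.sum_mul, mul_assoc]
      _ = _ := by
          rw [Q.sum_Sinv_mul_Sinv_alpha_mul a s _ _ hs.symm, mul_smul_comm, smul_mul_assoc]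
  simp only [Algebra.TensorProduct.map_tmul, AlgHom.id_apply, hs, TensorProduct.sum_tmul,
    map_sum, Algebra.TensorProduct.assoc_tmul, Finset.sum_mul,
    Algebra.TensorProduct.tmul_mul_tmul, evrTensor_tmul]
  rw [← Finset.smul_sum, ← map_sum, ← Finset.sum_smul, hα, smul_assoc, map_smul, smul_comm]

lemma evrTensor_assoc_comul_comul_mul (a : H) (t : H ⊗[k] (H ⊗[k] H)) :
    Q.evrTensor m φ (Algebra.TensorProduct.assoc k k k H H H
        (Algebra.TensorProduct.map Q.comul (AlgHom.id k H) (Q.comul a)) * t) =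
      a • Q.evrTensor m φ t := by
  suffices Q.evrTensor m φ ∘ₗ LinearMap.mulLeft k (Algebra.TensorProduct.assoc k k k H H H
      (Algebra.TensorProduct.map Q.comul (AlgHom.id k H) (Q.comul a))) =
      Algebra.lsmul k k N a ∘ₗ Q.evrTensor m φ from LinearMap.congr_fun this t
  refine TensorProduct.ext_threefold' fun x y z => ?_
  obtain ⟨s, hs⟩ := TensorProduct.exists_finset (Q.comul a)
  simp only [LinearMap.comp_apply, LinearMap.mulLeft_apply, hs, map_sum, Finset.sum_mul,
    evrTensor_assoc_comul_tmul_mul, evrTensor_tmul, Algebra.lsmul_apply]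
  calc _ = ∑ p ∈ s, (Q.counit p.1 • p.2) • z • φ ((Q.Sinv y * Q.Sinv Q.alpha * x) • m) := by
        simp only [mul_smul, smul_assoc]
    _ = a • z • φ ((Q.Sinv y * Q.Sinv Q.alpha * x) • m) := by
        rw [← Finset.sum_smul, Q.sum_counit_smul a s _ _ hs.symm]

end QuasiHopfAlgebra

theorem evr_is_module_morphism_general
    {k H : Type} [Field k] [Ring H] [Algebra k H] (Q : QuasiHopfAlgebra k H)
    {M N : Type} [AddCommGroup M] [Module k M] [Module H M] [IsScalarTower k H M]
    [AddCommGroup N] [Module k N] [Module H N] [IsScalarTower k H N] :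
    ∀ (h : H) (m : M) (φ : M →ₗ[k] N)
      {ιP : Type} (sP : Finset ιP) (P Qc R : ιP → H)
      (_ : ∑ i ∈ sP, P i ⊗ₜ[k] (Qc i ⊗ₜ[k] R i) = Q.PhiInv)
      {ιh : Type} (sh : Finset ιh) (a b : ιh → H)
      (_ : ∑ j ∈ sh, a j ⊗ₜ[k] b j = Q.comul h)
      {ιc : ιh → Type} (sc : ∀ j, Finset (ιc j)) (c d : ∀ j, ιc j → H)
      (_ : ∀ j, ∑ l ∈ sc j, c j l ⊗ₜ[k] d j l = Q.comul (b j)),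
      -- `ev^r (h • (m ⊗ φ)) = ∑ⱼ ev^r ((a j • m) ⊗ (b j · φ))`
      ∑ j ∈ sh, ∑ i ∈ sP, ∑ l ∈ sc j,
          R i • (d j l • φ (Q.Sinv (c j l) •
            ((Q.Sinv (Qc i) * Q.Sinv Q.alpha * P i) • (a j • m)))) =
        -- `h • ev^r (m ⊗ φ)`
        h • ∑ i ∈ sP, R i • φ ((Q.Sinv (Qc i) * Q.Sinv Q.alpha * P i) • m) := by
  intro h m φ ιP sP P Qc R hP ιh sh a b hh ιc sc c d hc
  have hΔΔ : Algebra.TensorProduct.map (AlgHom.id k H) Q.comul (Q.comul h) =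
      ∑ j ∈ sh, ∑ l ∈ sc j, a j ⊗ₜ[k] (c j l ⊗ₜ[k] d j l) := by
    simp only [← hh, ← hc, map_sum, Algebra.TensorProduct.map_tmul, AlgHom.id_apply,
      TensorProduct.tmul_sum]
  calc _ = Q.evrTensor m φ
          (Q.PhiInv * Algebra.TensorProduct.map (AlgHom.id k H) Q.comul (Q.comul h)) := by
        rw [← hP, hΔΔ, Finset.sum_comm, Finset.sum_mul_sum]
        simp only [Finset.mul_sum, map_sum, Q.evrTensor_tmul_mul_tmul]
    _ = h • Q.evrTensor m φ Q.PhiInv := by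
        rw [Q.PhiInv_mul_map_comul, Q.evrTensor_assoc_comul_comul_mul]
    _ = _ := by
        simp only [← hP, map_sum, Q.evrTensor_tmul]

/-- `ev^r` is a morphism of left `H`-modules: `ev^r (h • (m ⊗ φ)) = h • ev^r (m ⊗ φ)`,
written out on Sweedler representations. -/
theorem evr_is_module_morphism
    {k H : Type} [Field k] [Ring H] [Algebra k H] (Q : QuasiHopfAlgebra k H)
    {M N : Type} [AddCommGroup M] [Module k M] [Module H M] [IsScalarTower k H M]
    [SMulCommClass k H M]
    [AddCommGroup N] [Module k N] [Module H N] [IsScalarTower k H N] [SMulCommClass k H N] :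
    ∀ (h : H) (m : M) (φ : M →ₗ[k] N)
      {ιP : Type} (sP : Finset ιP) (P Qc R : ιP → H)
      (_ : ∑ i ∈ sP, P i ⊗ₜ[k] (Qc i ⊗ₜ[k] R i) = Q.PhiInv)
      {ιh : Type} (sh : Finset ιh) (a b : ιh → H)
      (_ : ∑ j ∈ sh, a j ⊗ₜ[k] b j = Q.comul h)
      {ιc : ιh → Type} (sc : ∀ j, Finset (ιc j)) (c d : ∀ j, ιc j → H)
      (_ : ∀ j, ∑ l ∈ sc j, c j l ⊗ₜ[k] d j l = Q.comul (b j)),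
      -- `ev^r (h • (m ⊗ φ)) = ∑ⱼ ev^r ((a j • m) ⊗ (b j · φ))`
      ∑ j ∈ sh, ∑ i ∈ sP, ∑ l ∈ sc j,
          R i • (d j l • φ (Q.Sinv (c j l) •
            ((Q.Sinv (Qc i) * Q.Sinv Q.alpha * P i) • (a j • m)))) =
        -- `h • ev^r (m ⊗ φ)`
        h • ∑ i ∈ sP, R i • φ ((Q.Sinv (Qc i) * Q.Sinv Q.alpha * P i) • m) :=
  evr_is_module_morphism_general Q
end

section
/- Let 𝓜 be a biclosed monoidal category and M an object of the weak center of the contragradient bimodule category 𝓜^op satisfying the stability condition (the identity of M is fixed under the composite Hom(M,M) ≅ Hom(1, M◁M) → Hom(1, M▷M) ≅ Hom(M,M) induced by the central structure τ). Then each structure morphism τ_{M,V} : V◁M → M▷V is an isomorphism, i.e., M lies in the strong center. -/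
/-!
STATEMENT 19: Let `𝓜` be a biclosed monoidal category and `M` an object of the weak center
of the contragradient bimodule category `𝓜^op` satisfying the stability condition (the
identity of `M` is fixed under the composite
`Hom(M,M) ≅ Hom(𝟙, M ◁ M) → Hom(𝟙, M ▷ M) ≅ Hom(M,M)` induced by the central structure
`τ`).  Then each structure morphism `τ_{M,V} : V ◁ M → M ▷ V` is an isomorphism, i.e. `M`
lies in the strong center.

The biclosed structure is encoded by the internal-hom objects `lh V = V ◁ M`,
`rh V = M ▷ V` together with the adjunction bijections
`eL : (W ⊗ V ⟶ M) ≃ (W ⟶ lh V)` and `eR : (V ⊗ W ⟶ M) ≃ (W ⟶ rh V)`.  The weak-center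
data is the family `τ V : lh V ⟶ rh V`; its naturality (in the first variable, as needed)
and the hexagon axiom are encoded, via the adjunctions and the Yoneda embedding, by the
hypotheses `hnat` and `hhex` on the hom-set level maps `unitChain` and `PhiMap` below.
-/

open CategoryTheory MonoidalCategory

universe v u

section

variable {C : Type u} [Category.{v} C] [MonoidalCategory C]
variable (M0 : C) (lh rh : C → C)
variable (eL : ∀ V W : C, (W ⊗ V ⟶ M0) ≃ (W ⟶ lh V))
variable (eR : ∀ V W : C, (V ⊗ W ⟶ M0) ≃ (W ⟶ rh V))
variable (τ : ∀ V : C, lh V ⟶ rh V)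

/-- The composite `Hom(V, M) ≅ Hom(𝟙, V ◁ M) → Hom(𝟙, M ▷ V) ≅ Hom(V, M)` induced by
postcomposition with `τ_V` and the internal-hom adjunctions. -/
def unitChain (V : C) (f : V ⟶ M0) : V ⟶ M0 :=
  (ρ_ V).inv ≫ (eR V (𝟙_ C)).symm ((eL V (𝟙_ C)) ((λ_ V).hom ≫ f) ≫ τ V)

/-- The map `Hom(T ⊗ V, M) ≅ Hom(T, V ◁ M) → Hom(T, M ▷ V) ≅ Hom(V ⊗ T, M)` induced by
postcomposition with `τ_V` and the internal-hom adjunctions. -/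
def PhiMap (T V : C) (f : T ⊗ V ⟶ M0) : V ⊗ T ⟶ M0 :=
  (eR V T).symm ((eL V T f) ≫ τ V)

/-! Naturality makes `unitChain` a natural endomorphism of `Hom(-, M)`, so by Yoneda it is
determined by its value on `𝟙 M`, which stability makes the identity. The hexagon axiom then
says that the two maps `PhiMap` between `Hom(T ⊗ V, M)` and `Hom(V ⊗ T, M)` are mutually
inverse. Up to the adjunctions, `PhiMap` is postcomposition with `τ_V`, which is therefore
bijective on every hom-set, and `τ_V` is an isomorphism by Yoneda. -/

theorem unitChain_eq_self
    (hnat : ∀ {V V' : C} (g : V ⟶ V') (f : V' ⟶ M0),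
      unitChain M0 lh rh eL eR τ V (g ≫ f) = g ≫ unitChain M0 lh rh eL eR τ V' f)
    (hstab : unitChain M0 lh rh eL eR τ M0 (𝟙 M0) = 𝟙 M0) (V : C) (f : V ⟶ M0) :
    unitChain M0 lh rh eL eR τ V f = f := by
  simpa [hstab] using hnat f (𝟙 M0)

theorem PhiMap_leftInverse
    (hid : ∀ (V : C) (f : V ⟶ M0), unitChain M0 lh rh eL eR τ V f = f)
    (hhex : ∀ (T V : C) (f : T ⊗ V ⟶ M0),
      PhiMap M0 lh rh eL eR τ V T (PhiMap M0 lh rh eL eR τ T V f) =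
        unitChain M0 lh rh eL eR τ (T ⊗ V) f) (T V : C) :
    Function.LeftInverse (PhiMap M0 lh rh eL eR τ V T) (PhiMap M0 lh rh eL eR τ T V) :=
  fun f => (hhex T V f).trans (hid _ f)

theorem comp_τ_bijective
    (hid : ∀ (V : C) (f : V ⟶ M0), unitChain M0 lh rh eL eR τ V f = f)
    (hhex : ∀ (T V : C) (f : T ⊗ V ⟶ M0),
      PhiMap M0 lh rh eL eR τ V T (PhiMap M0 lh rh eL eR τ T V f) =
        unitChain M0 lh rh eL eR τ (T ⊗ V) f) (V T : C) :
    Function.Bijective (fun h : T ⟶ lh V => h ≫ τ V) := by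
  have hPhi : Function.Bijective (PhiMap M0 lh rh eL eR τ T V) :=
    ⟨(PhiMap_leftInverse M0 lh rh eL eR τ hid hhex T V).injective,
      (PhiMap_leftInverse M0 lh rh eL eR τ hid hhex V T).surjective⟩
  have hconj : (fun h : T ⟶ lh V => h ≫ τ V) =
      eR V T ∘ PhiMap M0 lh rh eL eR τ T V ∘ (eL V T).symm :=
    funext fun h => by simp [PhiMap]
  rw [hconj]
  exact (eR V T).bijective.comp (hPhi.comp (eL V T).symm.bijective)

/-- Stability forces the weak-center structure morphisms `τ_V : V ◁ M → M ▷ V` to be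
isomorphisms, i.e. a stable object of the weak center lies in the strong center. -/
theorem stable_weak_center_is_strong
    -- naturality of the `τ`-induced chain in `V` (a consequence of the naturality of the
    -- weak-center structure and of the adjunctions)
    (hnat : ∀ {V V' : C} (g : V ⟶ V') (f : V' ⟶ M0),
      unitChain M0 lh rh eL eR τ V (g ≫ f) = g ≫ unitChain M0 lh rh eL eR τ V' f)
    -- the stability condition: the identity of `M` is fixed
    (hstab : unitChain M0 lh rh eL eR τ M0 (𝟙 M0) = 𝟙 M0)
    -- the hexagon axiom, transported to hom-sets along the adjunctions
    (hhex : ∀ (T V : C) (f : T ⊗ V ⟶ M0),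
      PhiMap M0 lh rh eL eR τ V T (PhiMap M0 lh rh eL eR τ T V f) =
        unitChain M0 lh rh eL eR τ (T ⊗ V) f) :
    ∀ V : C, IsIso (τ V) := by
  have hid := unitChain_eq_self M0 lh rh eL eR τ hnat hstab
  exact fun V =>
    isIso_of_yoneda_map_bijective (τ V) (comp_τ_bijective M0 lh rh eL eR τ hid hhex V)

end
end
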